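/- arXiv:2311.09110 — 4 statements merged into one kernel-verified Lean document; each statement's English description precedes it below -/
import Mathlib

section
/- Let V be a topological vector space over ℝ and let α be an infinite cardinal with α ≥ w(V), the weight of V. Let M be a nonempty subset of V for which there exists a nonempty subset N of V such that (i) M is stronger than N, (ii) M ∩ N = ∅, and (iii) N is dense lineable in V. If M is pointwise α-lineable, then M is infinitely pointwise α-dense lineable; that is, for every x ∈ M there exists a countable family {Wₙ : n ∈ ℕ} of linear subspaces of V such that for each n ∈ ℕ the subspace Wₙ is dense in V, dim(Wₙ) = α, x ∈ Wₙ ⊆ M ∪ {0}, and Wₘ ∩ Wₙ = ℝ·x (the span of x) whenever m ≠ n. -/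
open Cardinal

/-- The weight of a topological space: the minimal cardinality of a basis for its topology. -/
noncomputable def topWeight (V : Type u) [TopologicalSpace V] : Cardinal.{u} :=
  ⨅ B : {B : Set (Set V) // TopologicalSpace.IsTopologicalBasis B}, #B.1

theorem infinite_pointwise_dense_lineable
    {V : Type u} [AddCommGroup V] [Module ℝ V] [TopologicalSpace V]
    [IsTopologicalAddGroup V] [ContinuousSMul ℝ V]
    (α : Cardinal.{u}) (hα : ℵ₀ ≤ α) (hw : topWeight V ≤ α)
    (M N : Set V) (hM : M.Nonempty) (hN : N.Nonempty)
    (hstr : ∀ x ∈ M, ∀ y ∈ N, x + y ∈ M)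
    (hdisj : M ∩ N = ∅)
    (hdl : ∃ D : Submodule ℝ V, Dense (D : Set V) ∧ (D : Set V) ⊆ N ∪ {0})
    (hpl : ∀ x ∈ M, ∃ W : Submodule ℝ V,
      x ∈ W ∧ Module.rank ℝ W = α ∧ (W : Set V) ⊆ M ∪ {0}) :
    ∀ x ∈ M, ∃ W : ℕ → Submodule ℝ V,
      (∀ n, Dense ((W n : Set V))) ∧
      (∀ n, Module.rank ℝ (W n) = α) ∧
      (∀ n, x ∈ W n) ∧
      (∀ n, (W n : Set V) ⊆ M ∪ {0}) ∧
      (∀ m n, m ≠ n → W m ⊓ W n = Submodule.span ℝ {x}) := by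
  classical
  -- extract a topological basis of cardinality ≤ α
  obtain ⟨B₀, hB₀, hB₀le⟩ : ∃ B₀ : Set (Set V),
      TopologicalSpace.IsTopologicalBasis B₀ ∧ #B₀ ≤ α := by
    have hne : Nonempty {B : Set (Set V) // TopologicalSpace.IsTopologicalBasis B} :=
      ⟨⟨{U | IsOpen U}, TopologicalSpace.isTopologicalBasis_opens⟩⟩
    have hmem : topWeight V ∈
        Set.range (fun B : {B : Set (Set V) // TopologicalSpace.IsTopologicalBasis B} => #B.1) :=
      csInf_mem (Set.range_nonempty _)
    obtain ⟨B, hB⟩ := hmem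
    exact ⟨B.1, B.2, hB.le.trans hw⟩
  obtain ⟨D, hDd, hDsub⟩ := hdl
  intro x hx
  obtain ⟨W, hxW, hWrank, hWsub⟩ := hpl x hx
  -- W and D intersect trivially
  have hWD : ∀ v, v ∈ W → v ∈ D → v = 0 := by
    intro v hvW hvD
    by_contra h0
    have hvM : v ∈ M := by
      rcases hWsub hvW with h | h
      · exact h
      · exact absurd h h0
    have hvN : v ∈ N := by
      rcases hDsub hvD with h | h
      · exact h
      · exact absurd h h0
    have : v ∈ M ∩ N := ⟨hvM, hvN⟩
    rw [hdisj] at this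
    exact this
  -- a complement of span {x} inside W
  set xW : W := ⟨x, hxW⟩ with hxWdef
  obtain ⟨q, hq⟩ := Submodule.exists_isCompl (Submodule.span ℝ {xW})
  set C : Submodule ℝ V := q.map W.subtype with hCdef
  have hCW : C ≤ W := Submodule.map_subtype_le W q
  have hrankq : Module.rank ℝ q = α := by
    have h1 := Submodule.rank_sup_add_rank_inf_eq (Submodule.span ℝ {xW}) q
    rw [hq.sup_eq_top, hq.inf_eq_bot, rank_top, rank_bot, add_zero, hWrank] at h1
    have hp1 : Module.rank ℝ (Submodule.span ℝ {xW}) ≤ 1 := by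
      refine (rank_span_le _).trans ?_
      simp
    have hle : Module.rank ℝ q ≤ α := by
      rw [h1]; exact le_add_self
    have hge : α ≤ Module.rank ℝ q := by
      have h2 : α ≤ 1 + Module.rank ℝ q := by
        rw [h1]; exact add_le_add_left hp1 _
      have hinf : ℵ₀ ≤ Module.rank ℝ q := by
        by_contra hlt
        push_neg at hlt
        have : (1 : Cardinal) + Module.rank ℝ q < ℵ₀ :=
          Cardinal.add_lt_aleph0 Cardinal.one_lt_aleph0 hlt
        exact absurd (hα.trans h2) (not_le.mpr this)
      calc α ≤ 1 + Module.rank ℝ q := h2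
        _ = Module.rank ℝ q := by
            rw [add_comm, Cardinal.add_one_eq hinf]
    exact le_antisymm hle hge
  have hrankC : Module.rank ℝ C = α := by
    rw [← hrankq]
    exact ((Submodule.equivMapOfInjective W.subtype
      (Submodule.injective_subtype W) q).symm.rank_eq)
  -- span {x} meets C trivially
  have hPC : ∀ v, v ∈ C → (∃ t : ℝ, v = t • x) → v = 0 := by
    rintro v hvC ⟨t, ht⟩
    obtain ⟨w, hwq, rfl⟩ := hvC
    have hwt : w = t • xW := Subtype.ext (by simpa using ht)
    have hwp : w ∈ Submodule.span ℝ {xW} :=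
      hwt ▸ Submodule.smul_mem _ t (Submodule.mem_span_singleton_self xW)
    have : w ∈ (⊥ : Submodule ℝ W) := by
      rw [← hq.inf_eq_bot]
      exact ⟨hwp, hwq⟩
    rw [Submodule.mem_bot] at this
    simp [this]
  -- basis of C and reindexing
  set bC := Module.Basis.ofVectorSpace ℝ C with hbCdef
  set κ := Module.Basis.ofVectorSpaceIndex ℝ C with hκdef
  have hκcard : #κ = α := by rw [bC.mk_eq_rank'', hrankC]
  have hprod : #(ℕ × ↥κ) = #(↥κ) := by
    rw [Cardinal.mk_prod, Cardinal.mk_nat, Cardinal.lift_aleph0, Cardinal.lift_uzero, hκcard]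
    exact Cardinal.mul_eq_right hα hα Cardinal.aleph0_ne_zero
  obtain ⟨E⟩ : Nonempty (ℕ × ↥κ ≃ ↥κ) := Cardinal.eq.mp hprod
  set vec : ℕ × ↥κ → V := fun p => ((bC (E p) : C) : V) with hvecdef
  have hvecC : ∀ p, vec p ∈ C := fun p => (bC (E p)).2
  have hvecli : LinearIndependent ℝ vec := by
    have h1 : LinearIndependent ℝ (fun i : ↥κ => ((bC i : C) : V)) :=
      bC.linearIndependent.map' C.subtype (Submodule.ker_subtype C)
    exact h1.comp E E.injective
  have hveclin : ∀ n : ℕ, LinearIndependent ℝ (fun k : ↥κ => vec (n, k)) := by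
    intro n
    exact hvecli.comp (fun k => (n, k)) (fun k₁ k₂ h => (Prod.mk.injEq _ _ _ _ ▸ h : _ ∧ _).2)
  -- injection from the topological basis into κ
  obtain ⟨β⟩ : Nonempty (↥B₀ ↪ ↥κ) := by
    rw [← Cardinal.le_def, hκcard]
    exact hB₀le
  -- choose perturbation data
  have hchoice : ∀ (n : ℕ) (b : ↥B₀), ∃ r : ℝ, ∃ d : V, r ≠ 0 ∧ d ∈ D ∧
      ((b : Set V).Nonempty → r • vec (n, β b) + d ∈ (b : Set V)) := by
    intro n b
    by_cases hne : (b : Set V).Nonempty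
    · have hopen : IsOpen (b : Set V) := hB₀.isOpen b.2
      obtain ⟨d, hdD, hdU⟩ := hDd.exists_mem_open hopen hne
      have hcont : Continuous fun t : ℝ => t • vec (n, β b) + d :=
        (continuous_id.smul continuous_const).add continuous_const
      have hpre : (fun t : ℝ => t • vec (n, β b) + d) ⁻¹' (b : Set V) ∈ nhds (0 : ℝ) := by
        refine (hopen.preimage hcont).mem_nhds ?_
        simpa using hdU
      have hmem2 : ((fun t : ℝ => t • vec (n, β b) + d) ⁻¹' (b : Set V)) ∩ ({(0:ℝ)}ᶜ)
          ∈ nhdsWithin (0 : ℝ) ({(0:ℝ)}ᶜ) :=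
        Filter.inter_mem (mem_nhdsWithin_of_mem_nhds hpre) self_mem_nhdsWithin
      obtain ⟨r, hr1, hr2⟩ := Filter.nonempty_of_mem hmem2
      exact ⟨r, d, hr2, hdD, fun _ => hr1⟩
    · exact ⟨1, 0, one_ne_zero, D.zero_mem, fun h => absurd h hne⟩
  choose r d hr hd hrd using hchoice
  -- the perturbation vectors
  set Δ : ℕ → ↥κ → V := fun n k =>
    if h : ∃ b, β b = k then (r n h.choose)⁻¹ • d n h.choose else 0 with hΔdef
  have hΔD : ∀ n k, Δ n k ∈ D := by
    intro n k
    rw [hΔdef]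
    dsimp only
    split_ifs with h
    · exact D.smul_mem _ (hd n h.choose)
    · exact D.zero_mem
  have hΔβ : ∀ n (b : ↥B₀), Δ n (β b) = (r n b)⁻¹ • d n b := by
    intro n b
    have h : ∃ b', β b' = β b := ⟨b, rfl⟩
    have hcb : h.choose = b := β.injective h.choose_spec
    rw [hΔdef]
    dsimp only
    rw [dif_pos h, hcb]
  set g : ℕ → ↥κ → V := fun n k => vec (n, k) + Δ n k with hgdef
  set S : ℕ → Submodule ℝ V := fun n =>
    Submodule.span ℝ (insert x (Set.range (g n))) with hSdef
  have hxS : ∀ n, x ∈ S n := fun n => Submodule.subset_span (Set.mem_insert _ _)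
  have hgS : ∀ n k, g n k ∈ S n :=
    fun n k => Submodule.subset_span (Set.mem_insert_of_mem _ ⟨k, rfl⟩)
  -- decomposition of elements of S n
  have hdecomp : ∀ n, ∀ s ∈ S n, ∃ (t : ℝ) (a : ↥κ →₀ ℝ),
      s = t • x + (a.sum fun k c => c • vec (n, k)) + (a.sum fun k c => c • Δ n k) := by
    intro n s hs
    rw [hSdef] at hs
    rw [Submodule.mem_span_insert] at hs
    obtain ⟨t, z, hz, rfl⟩ := hs
    obtain ⟨a, rfl⟩ := Finsupp.mem_span_range_iff_exists_finsupp.mp hz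
    refine ⟨t, a, ?_⟩
    rw [add_assoc]
    congr 1
    rw [← Finsupp.sum_add]
    apply Finsupp.sum_congr
    intro k _
    rw [hgdef]
    dsimp only
    rw [smul_add]
  -- membership of the partial sums
  have hsumC : ∀ n (a : ↥κ →₀ ℝ), (a.sum fun k c => c • vec (n, k)) ∈ C :=
    fun n a => Submodule.finsuppSum_mem ℝ C a _ (fun k _ => C.smul_mem _ (hvecC _))
  have hsumD : ∀ n (a : ↥κ →₀ ℝ), (a.sum fun k c => c • Δ n k) ∈ D :=
    fun n a => Submodule.finsuppSum_mem ℝ D a _ (fun k _ => D.smul_mem _ (hΔD n k))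
  -- vanishing of coefficients
  have hkerv : ∀ n (a : ↥κ →₀ ℝ), (a.sum fun k c => c • vec (n, k)) = 0 → a = 0 := by
    intro n a ha
    refine linearIndependent_iff.mp (hveclin n) a ?_
    rw [Finsupp.linearCombination_apply]
    exact ha
  -- S n is contained in M ∪ {0}
  have hSsub : ∀ n, ((S n : Submodule ℝ V) : Set V) ⊆ M ∪ {0} := by
    intro n s hs
    obtain ⟨t, a, rfl⟩ := hdecomp n s hs
    set u : V := a.sum fun k c => c • vec (n, k) with hudef
    set δ : V := a.sum fun k c => c • Δ n k with hδdef
    have hωW : t • x + u ∈ W := W.add_mem (W.smul_mem t hxW) (hCW (hsumC n a))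
    have hδD : δ ∈ D := hsumD n a
    by_cases hs0 : t • x + u + δ = 0
    · right; exact hs0
    left
    by_cases hδ0 : δ = 0
    · have hmemW : t • x + u + δ ∈ W := by rw [hδ0, add_zero]; exact hωW
      rcases hWsub hmemW with h | h
      · exact h
      · exact absurd h hs0
    · have hδN : δ ∈ N := by
        rcases hDsub hδD with h | h
        · exact h
        · exact absurd h hδ0
      have hω0 : t • x + u ≠ 0 := by
        intro h0
        have hu : u = (-t) • x := by
          rw [neg_smul]
          rw [eq_neg_iff_add_eq_zero, add_comm]
          exact h0
        have : u = 0 := hPC u (hsumC n a) ⟨-t, hu⟩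
        have ha0 : a = 0 := hkerv n a (hudef ▸ this)
        apply hδ0
        rw [hδdef, ha0, Finsupp.sum_zero_index]
      have hωM : t • x + u ∈ M := by
        rcases hWsub hωW with h | h
        · exact h
        · exact absurd h hω0
      exact hstr _ hωM _ hδN
  -- density
  have hSdense : ∀ n, Dense ((S n : Submodule ℝ V) : Set V) := by
    intro n
    rw [dense_iff_inter_open]
    rintro O hO ⟨y, hy⟩
    obtain ⟨U, hUB, hyU, hUO⟩ := hB₀.exists_subset_of_mem_open hy hO
    set b : ↥B₀ := ⟨U, hUB⟩ with hbdef
    have hUne : (b : Set V).Nonempty := ⟨y, hyU⟩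
    have h1 : r n b • vec (n, β b) + d n b ∈ (b : Set V) := hrd n b hUne
    have h2 : r n b • g n (β b) = r n b • vec (n, β b) + d n b := by
      rw [hgdef]
      dsimp only
      rw [smul_add, hΔβ n b, smul_inv_smul₀ (hr n b)]
    exact ⟨r n b • g n (β b), hUO (h2 ▸ h1), (S n).smul_mem _ (hgS n (β b))⟩
  -- rank
  have hSrank : ∀ n, Module.rank ℝ (S n) = α := by
    intro n
    apply le_antisymm
    · calc Module.rank ℝ (S n) ≤ #(insert x (Set.range (g n)) : Set V) := rank_span_le _
        _ ≤ #(Set.range (g n)) + 1 := Cardinal.mk_insert_le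
        _ ≤ α + 1 := by
            refine add_le_add_left ?_ 1
            refine Cardinal.mk_range_le.trans ?_
            rw [hκcard]
        _ = α := Cardinal.add_one_eq hα
    · have hgli : LinearIndependent ℝ (g n) := by
        rw [linearIndependent_iff]
        intro a ha
        rw [Finsupp.linearCombination_apply] at ha
        have hsplit : (a.sum fun k c => c • vec (n, k)) + (a.sum fun k c => c • Δ n k) = 0 := by
          rw [← Finsupp.sum_add]
          rw [← ha]
          apply Finsupp.sum_congr
          intro k _
          rw [hgdef]
          dsimp only
          rw [smul_add]
        have hu0 : (a.sum fun k c => c • vec (n, k)) = 0 := by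
          refine hWD _ (hCW (hsumC n a)) ?_
          have : (a.sum fun k c => c • vec (n, k)) = -(a.sum fun k c => c • Δ n k) := by
            rw [eq_neg_iff_add_eq_zero]; exact hsplit
          rw [this]
          exact D.neg_mem (hsumD n a)
        exact hkerv n a hu0
      have h3 : Module.rank ℝ (Submodule.span ℝ (Set.range (g n))) = #(Set.range (g n)) := by
        rw [rank_span hgli]
      have h4 : #(Set.range (g n)) = α := by
        rw [Cardinal.mk_range_eq _ hgli.injective, hκcard]
      have h5 : Submodule.span ℝ (Set.range (g n)) ≤ S n := by
        rw [hSdef]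
        exact Submodule.span_mono (Set.subset_insert _ _)
      calc α = Module.rank ℝ (Submodule.span ℝ (Set.range (g n))) := by rw [h3, h4]
        _ ≤ Module.rank ℝ (S n) := Submodule.rank_mono h5
  -- pairwise intersections
  have hSinter : ∀ m n, m ≠ n → S m ⊓ S n = Submodule.span ℝ {x} := by
    intro m n hmn
    apply le_antisymm
    · rintro s ⟨hsm, hsn⟩
      obtain ⟨t₁, a₁, h₁⟩ := hdecomp m s hsm
      obtain ⟨t₂, a₂, h₂⟩ := hdecomp n s hsn
      set u₁ : V := a₁.sum fun k c => c • vec (m, k) with hu₁def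
      set u₂ : V := a₂.sum fun k c => c • vec (n, k) with hu₂def
      set δ₁ : V := a₁.sum fun k c => c • Δ m k with hδ₁def
      set δ₂ : V := a₂.sum fun k c => c • Δ n k with hδ₂def
      have heq : t₁ • x + u₁ + δ₁ = t₂ • x + u₂ + δ₂ := by rw [← h₁, ← h₂]
      have hv : (t₁ - t₂) • x + (u₁ - u₂) = δ₂ - δ₁ := by
        rw [sub_smul]
        rw [show δ₂ - δ₁ = (t₂ • x + u₂ + δ₂) - (t₂ • x + u₂) - δ₁ by abel, ← heq]
        abel
      have hvW : (t₁ - t₂) • x + (u₁ - u₂) ∈ W :=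
        W.add_mem (W.smul_mem _ hxW)
          (W.sub_mem (hCW (hsumC m a₁)) (hCW (hsumC n a₂)))
      have hvD : (t₁ - t₂) • x + (u₁ - u₂) ∈ D := by
        rw [hv]; exact D.sub_mem (hsumD n a₂) (hsumD m a₁)
      have hv0 : (t₁ - t₂) • x + (u₁ - u₂) = 0 := hWD _ hvW hvD
      have hu12 : u₁ - u₂ = (t₂ - t₁) • x := by
        have h' : (u₁ - u₂) + (t₁ - t₂) • x = 0 := by rw [add_comm]; exact hv0
        rw [← neg_sub t₁ t₂, neg_smul]
        exact eq_neg_of_add_eq_zero_left h'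
      have hu0 : u₁ - u₂ = 0 :=
        hPC _ (C.sub_mem (hsumC m a₁) (hsumC n a₂)) ⟨t₂ - t₁, hu12⟩
      have huu : u₁ = u₂ := sub_eq_zero.mp hu0
      have hdisj2 : Disjoint (Submodule.span ℝ (vec '' ({m} ×ˢ (Set.univ : Set ↥κ))))
          (Submodule.span ℝ (vec '' ({n} ×ˢ (Set.univ : Set ↥κ)))) := by
        apply hvecli.disjoint_span_image
        rw [Set.disjoint_left]
        rintro ⟨p1, p2⟩ hp1 hp2
        rw [Set.mem_prod] at hp1 hp2
        exact hmn (hp1.1.symm.trans hp2.1)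
      have hu₁mem : u₁ ∈ Submodule.span ℝ (vec '' ({m} ×ˢ (Set.univ : Set ↥κ))) := by
        rw [hu₁def]
        refine Submodule.finsuppSum_mem ℝ _ a₁ _ (fun k _ => Submodule.smul_mem _ _ ?_)
        exact Submodule.subset_span ⟨(m, k), ⟨rfl, Set.mem_univ _⟩, rfl⟩
      have hu₂mem : u₂ ∈ Submodule.span ℝ (vec '' ({n} ×ˢ (Set.univ : Set ↥κ))) := by
        rw [hu₂def]
        refine Submodule.finsuppSum_mem ℝ _ a₂ _ (fun k _ => Submodule.smul_mem _ _ ?_)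
        exact Submodule.subset_span ⟨(n, k), ⟨rfl, Set.mem_univ _⟩, rfl⟩
      have hu₁0 : u₁ = 0 := by
        have hbot : u₁ ∈ (⊥ : Submodule ℝ V) := hdisj2.le_bot ⟨hu₁mem, huu ▸ hu₂mem⟩
        simpa using hbot
      have ha₁0 : a₁ = 0 := hkerv m a₁ (hu₁def ▸ hu₁0)
      have hδ₁0 : δ₁ = 0 := by rw [hδ₁def, ha₁0, Finsupp.sum_zero_index]
      have hs : s = t₁ • x := by rw [h₁, hu₁0, hδ₁0, add_zero, add_zero]
      rw [Submodule.mem_span_singleton]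
      exact ⟨t₁, hs.symm⟩
    · rw [Submodule.span_le, Set.singleton_subset_iff]
      exact ⟨hxS m, hxS n⟩
  exact ⟨S, hSdense, hSrank, hxS, hSsub, hSinter⟩
end

section
/- Let V be a metrizable separable topological vector space over ℝ and let α be an infinite cardinal. Let M be a nonempty subset of V for which there exists a nonempty subset N of V such that (i) M is stronger than N, (ii) M ∩ N = ∅, and (iii) N is dense lineable in V. If M is pointwise α-lineable, then M is infinitely pointwise α-dense lineable; that is, for every x ∈ M there exists a countable family {Wₙ : n ∈ ℕ} of linear subspaces of V such that for each n ∈ ℕ the subspace Wₙ is dense in V, dim(Wₙ) = α, x ∈ Wₙ ⊆ M ∪ {0}, and Wₘ ∩ Wₙ = ℝ·x (the span of x) whenever m ≠ n. -/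
open Cardinal Set Submodule Filter Topology

theorem aux_span_inter {ι : Type*} {V : Type*} [AddCommGroup V] [Module ℝ V] {f : ι → V}
    (hf : LinearIndependent ℝ f) (A B : Set ι) :
    span ℝ (f '' A) ⊓ span ℝ (f '' B) = span ℝ (f '' (A ∩ B)) := by
  refine le_antisymm ?_ (le_inf (span_mono (image_mono (f := f) inter_subset_left))
    (span_mono (image_mono (f := f) inter_subset_right)))
  intro v hv
  rw [Submodule.mem_inf] at hv
  obtain ⟨hvA, hvB⟩ := hv
  rw [Finsupp.mem_span_image_iff_linearCombination] at hvA hvB ⊢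
  obtain ⟨l₁, hl₁, rfl⟩ := hvA
  obtain ⟨l₂, hl₂, h12⟩ := hvB
  have hll : l₂ = l₁ := hf h12
  subst hll
  exact ⟨l₂, (Finsupp.mem_supported ℝ _).2 (subset_inter ((Finsupp.mem_supported ℝ _).1 hl₁)
    ((Finsupp.mem_supported ℝ _).1 hl₂)), rfl⟩

theorem aux_disjoint_ker {ι : Type*} {V Q : Type*} [AddCommGroup V] [Module ℝ V]
    [AddCommGroup Q] [Module ℝ Q] (f : ι → V) (q : V →ₗ[ℝ] Q)
    (h : LinearIndependent ℝ (q ∘ f)) :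
    Disjoint (span ℝ (Set.range f)) (LinearMap.ker q) := by
  rw [Submodule.disjoint_def]
  intro v hv hker
  rw [← Finsupp.range_linearCombination] at hv
  obtain ⟨l, rfl⟩ := hv
  have h0 : Finsupp.linearCombination ℝ (q ∘ f) l = 0 := by
    rw [← Finsupp.apply_linearCombination]
    exact LinearMap.mem_ker.1 hker
  have hl : l = 0 := h (by simpa using h0)
  simp [hl]

theorem infinite_pointwise_dense_lineable_metrizable_separable
    {V : Type u} [AddCommGroup V] [Module ℝ V] [TopologicalSpace V]
    [IsTopologicalAddGroup V] [ContinuousSMul ℝ V]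
    [TopologicalSpace.MetrizableSpace V] [TopologicalSpace.SeparableSpace V]
    (α : Cardinal.{u}) (hα : ℵ₀ ≤ α)
    (M N : Set V) (hM : M.Nonempty) (hN : N.Nonempty)
    (hstr : ∀ x ∈ M, ∀ y ∈ N, x + y ∈ M)
    (hdisj : M ∩ N = ∅)
    (hdl : ∃ D : Submodule ℝ V, Dense (D : Set V) ∧ (D : Set V) ⊆ N ∪ {0})
    (hpl : ∀ x ∈ M, ∃ W : Submodule ℝ V,
      x ∈ W ∧ Module.rank ℝ W = α ∧ (W : Set V) ⊆ M ∪ {0}) :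
    ∀ x ∈ M, ∃ W : ℕ → Submodule ℝ V,
      (∀ n, Dense ((W n : Set V))) ∧
      (∀ n, Module.rank ℝ (W n) = α) ∧
      (∀ n, x ∈ W n) ∧
      (∀ n, (W n : Set V) ⊆ M ∪ {0}) ∧
      (∀ m n, m ≠ n → W m ⊓ W n = Submodule.span ℝ {x}) := by
  classical
  obtain ⟨y0, hy0⟩ := hN
  obtain ⟨D, hDdense, hDN⟩ := hdl
  have h0M : (0 : V) ∉ M := by
    intro h0
    have hy0M : y0 ∈ M := by simpa using hstr 0 h0 y0 hy0
    have hmem : y0 ∈ M ∩ N := ⟨hy0M, hy0⟩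
    rw [hdisj] at hmem
    exact hmem
  haveI : SecondCountableTopology V := by
    letI := TopologicalSpace.metrizableSpaceMetric V
    exact UniformSpace.secondCountable_of_separable V
  obtain ⟨s, hsD, hscnt, hsdense⟩ := hDdense.exists_countable_dense_subset
  have hsne : s.Nonempty := hsdense.nonempty
  obtain ⟨e, he⟩ := hscnt.exists_eq_range hsne
  have heD : ∀ k, e k ∈ D := fun k => hsD (he ▸ mem_range_self k)
  have hedense : Dense (Set.range e) := he ▸ hsdense
  obtain ⟨u, hu⟩ := (𝓝 (0 : V)).exists_antitone_basis
  intro x hxM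
  have hx0 : x ≠ 0 := fun h => h0M (h ▸ hxM)
  obtain ⟨W, hxW, hrank, hWM⟩ := hpl x hxM
  have hWD : Disjoint W D := by
    rw [Submodule.disjoint_def]
    intro v hvW hvD
    by_contra hv0
    have h1 : v ∈ M := by
      rcases hWM hvW with h | h
      · exact h
      · exact absurd h hv0
    have h2 : v ∈ N := by
      rcases hDN hvD with h | h
      · exact h
      · exact absurd h hv0
    have hmem : v ∈ M ∩ N := ⟨h1, h2⟩
    rw [hdisj] at hmem
    exact hmem
  -- basis of W extending {x}
  set x' : W := ⟨x, hxW⟩ with hx'def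
  have hx'0 : x' ≠ 0 := by
    intro h
    exact hx0 (by simpa [hx'def] using congrArg Subtype.val h)
  have hli : LinearIndepOn ℝ id ({x'} : Set W) :=
    LinearIndepOn.singleton (v := id) hx'0
  set t : Set W := hli.extend (Set.subset_univ _) with htdef
  have htli : LinearIndependent ℝ ((↑) : t → W) := hli.linearIndepOn_extend _
  have hxt : x' ∈ t := hli.subset_extend _ rfl
  have hmkt : #t = α := by
    have h := (Module.Basis.extend hli).mk_eq_rank''
    rw [hrank] at h
    exact h
  have hmkd : #(t \ {x'} : Set W) = α := by
    have h1 : #(t \ {x'} : Set W) + #({x'} : Set W) = #t :=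
      Cardinal.mk_diff_add_mk (by simpa using hxt)
    rw [Cardinal.mk_singleton, hmkt] at h1
    rcases le_or_gt ℵ₀ #(t \ {x'} : Set W) with h | h
    · rwa [Cardinal.add_one_eq h] at h1
    · exfalso
      have hlt : #(t \ {x'} : Set W) + 1 < ℵ₀ := Cardinal.add_lt_aleph0 h Cardinal.one_lt_aleph0
      rw [h1] at hlt
      exact absurd hα (not_le.mpr hlt)
  -- index type
  set σ : Type u := Quotient.out α with hσdef
  set ι₀ : Type u := ULift.{u} ℕ × ULift.{u} ℕ × ULift.{u} ℕ × σ with hι₀def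
  have hmkn : #(ULift.{u} ℕ) = ℵ₀ := by simp
  have hmkσ : #σ = α := Cardinal.mk_out α
  have haux : ℵ₀ * α = α := Cardinal.mul_eq_right hα hα Cardinal.aleph0_ne_zero
  have hmkι : #ι₀ = α := by
    rw [hι₀def]
    rw [Cardinal.mk_prod, Cardinal.mk_prod, Cardinal.mk_prod, hmkn, hmkσ]
    simp only [Cardinal.lift_id, Cardinal.lift_aleph0]
    rw [haux, haux, haux]
  have hσne : Nonempty σ := by
    rw [← Cardinal.mk_ne_zero_iff, hmkσ]
    intro h
    rw [h] at hα
    exact Cardinal.aleph0_ne_zero (le_zero_iff.mp hα)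
  obtain ⟨E⟩ : Nonempty (ι₀ ≃ (t \ {x'} : Set W)) :=
    Cardinal.eq.mp (hmkι.trans hmkd.symm)
  -- base vectors in V
  set bb : ι₀ → V := fun i => ((E i : W) : V) with hbbdef
  have hbbW : ∀ i, bb i ∈ W := fun i => SetLike.coe_mem _
  -- choose scalars
  have hex : ∀ i : ι₀, ∃ c : ℝ, c ≠ 0 ∧ c • bb i ∈ u i.2.2.1.down := by
    intro i
    have hcont : Tendsto (fun r : ℝ => r • bb i) (𝓝 0) (𝓝 0) := by
      have hc : Continuous fun r : ℝ => r • bb i := continuous_id.smul continuous_const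
      simpa using hc.tendsto 0
    have hmem : (fun r : ℝ => r • bb i) ⁻¹' u i.2.2.1.down ∈ 𝓝 (0 : ℝ) :=
      hcont (hu.toHasBasis.mem_of_mem trivial)
    have hne : ((fun r : ℝ => r • bb i) ⁻¹' u i.2.2.1.down ∩ {r : ℝ | r ≠ 0}).Nonempty :=
      Filter.nonempty_of_mem
        (Filter.inter_mem (mem_nhdsWithin_of_mem_nhds hmem) self_mem_nhdsWithin :
          _ ∈ 𝓝[≠] (0 : ℝ))
    obtain ⟨c, hc1, hc2⟩ := hne
    exact ⟨c, hc2, hc1⟩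
  choose ε hε0 hεu using hex
  -- the master family
  set F : Option ι₀ → V := fun o => o.elim x (fun i => ε i • bb i + e i.2.1.down) with hFdef
  set G : Option ι₀ → V := fun o => o.elim x (fun i => bb i) with hGdef
  have hGW : ∀ o, G o ∈ W := by
    rintro (_ | i)
    · exact hxW
    · exact hbbW i
  have hGli : LinearIndependent ℝ G := by
    set h : Option ι₀ → t := fun o => o.elim ⟨x', hxt⟩ (fun i => ⟨(E i : W), (E i).2.1⟩) with hhdef
    have hinj : Function.Injective h := by
      rintro (_ | i) (_ | j) hij
      · rfl
      · have hval := congrArg (Subtype.val : t → W) hij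
        exact absurd (Set.mem_singleton_iff.mpr hval.symm) (E j).2.2
      · have hval := congrArg (Subtype.val : t → W) hij
        exact absurd (Set.mem_singleton_iff.mpr hval) (E i).2.2
      · have hval := congrArg (Subtype.val : t → W) hij
        rw [E.injective (Subtype.ext hval)]
    have h2 : LinearIndependent ℝ (((↑) : t → W) ∘ h) := htli.comp h hinj
    have h3 : LinearIndependent ℝ ((W.subtype : W →ₗ[ℝ] V) ∘ (((↑) : t → W) ∘ h)) :=
      h2.map' W.subtype (Submodule.ker_subtype W)
    have hGeq : G = (W.subtype : W →ₗ[ℝ] V) ∘ (((↑) : t → W) ∘ h) := by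
      funext o
      cases o <;> rfl
    rw [hGeq]
    exact h3
  have hqG : LinearIndependent ℝ (D.mkQ ∘ G) := by
    apply hGli.map
    rw [Submodule.ker_mkQ]
    exact hWD.mono_left (span_le.mpr (Set.range_subset_iff.mpr hGW))
  have hqF : LinearIndependent ℝ (D.mkQ ∘ F) := by
    set c : Option ι₀ → ℝˣ := fun o => o.elim 1 (fun i => Units.mk0 (ε i) (hε0 i)) with hcdef
    have hsm := hqG.units_smul c
    have hre : ⇑D.mkQ ∘ F = fun o => c o • (⇑D.mkQ ∘ G) o := by
      funext o
      cases o with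
      | none => simp [hcdef, hFdef, hGdef]
      | some i =>
        have hz : D.mkQ (e i.2.1.down) = 0 := by
          rw [Submodule.mkQ_apply, Submodule.Quotient.mk_eq_zero]
          exact heD _
        simp [hFdef, hGdef, hcdef, map_add, map_smul, hz, Units.smul_def]
    rw [hre]
    exact hsm
  have hFli : LinearIndependent ℝ F := LinearIndependent.of_comp D.mkQ hqF
  -- slices
  set A : ℕ → Set (Option ι₀) := fun n => insert none (some '' {i : ι₀ | i.1 = ULift.up n})
    with hAdef
  set Wn : ℕ → Submodule ℝ V := fun n => span ℝ (F '' A n) with hWndef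
  have hxWn : ∀ n, x ∈ Wn n := fun n => subset_span ⟨none, mem_insert _ _, rfl⟩
  have hWnDense : ∀ n, Dense ((Wn n : Set V)) := by
    intro n
    have hclos : ∀ k : ℕ, e k ∈ closure (Wn n : Set V) := by
      intro k
      obtain ⟨s₀⟩ := hσne
      have hmem : ∀ j : ℕ, F (some (ULift.up n, ULift.up k, ULift.up j, s₀)) ∈ (Wn n : Set V) := by
        intro j
        exact subset_span ⟨some (ULift.up n, ULift.up k, ULift.up j, s₀),
          mem_insert_of_mem _ (mem_image_of_mem some rfl), rfl⟩
      have h1 : Tendsto (fun j : ℕ => ε (ULift.up n, ULift.up k, ULift.up j, s₀) •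
          bb (ULift.up n, ULift.up k, ULift.up j, s₀)) atTop (𝓝 0) :=
        hu.tendsto fun j => hεu (ULift.up n, ULift.up k, ULift.up j, s₀)
      have h2 := h1.add_const (e k)
      rw [zero_add] at h2
      have h3 : Tendsto (fun j : ℕ => F (some (ULift.up n, ULift.up k, ULift.up j, s₀)))
          atTop (𝓝 (e k)) := h2
      exact mem_closure_of_tendsto h3 (Eventually.of_forall hmem)
    intro v
    exact closure_minimal (range_subset_iff.2 hclos) isClosed_closure (hedense v)
  have hWnRank : ∀ n, Module.rank ℝ (Wn n) = α := by
    intro n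
    have hliA : LinearIndependent ℝ (F ∘ ((↑) : A n → Option ι₀)) :=
      hFli.comp _ Subtype.val_injective
    have hr := rank_span hliA
    rw [Set.range_comp, Subtype.range_coe] at hr
    have himg : #(F '' A n) = #(A n) := Cardinal.mk_image_eq_of_injOn F _ hFli.injective.injOn
    have hslice : #({i : ι₀ | i.1 = ULift.up n}) = α := by
      have hEq : {i : ι₀ | i.1 = ULift.up n} ≃ (ULift.{u} ℕ × ULift.{u} ℕ × σ) :=
        { toFun := fun p => p.1.2
          invFun := fun q => ⟨(ULift.up n, q), rfl⟩
          left_inv := by rintro ⟨⟨a, q⟩, h⟩; simp only [Set.mem_setOf_eq] at h; subst h; rfl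
          right_inv := fun q => rfl }
      rw [Cardinal.mk_congr hEq, Cardinal.mk_prod, Cardinal.mk_prod, hmkn, hmkσ]
      simp only [Cardinal.lift_id, Cardinal.lift_aleph0]
      rw [haux, haux]
    have hAn : #(A n) = α := by
      rw [hAdef]
      rw [Cardinal.mk_insert (by simp : (none : Option ι₀) ∉ some '' {i : ι₀ | i.1 = ULift.up n})]
      rw [Cardinal.mk_image_eq (Option.some_injective _), hslice, Cardinal.add_one_eq hα]
    rw [himg, hAn] at hr
    exact hr
  have hWnM : ∀ n, (Wn n : Set V) ⊆ M ∪ {0} := by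
    intro n v hv
    by_cases hv0 : v = 0
    · exact Or.inr hv0
    refine Or.inl ?_
    have hle : Wn n ≤ W ⊔ D := by
      rw [hWndef]
      apply span_le.2
      rintro _ ⟨o, ho, rfl⟩
      cases o with
      | none => exact Submodule.mem_sup_left hxW
      | some i =>
        exact Submodule.mem_sup.2 ⟨ε i • bb i, W.smul_mem _ (hbbW i), e i.2.1.down, heD _, rfl⟩
    have hvWD := hle hv
    obtain ⟨w, hw, d, hd, hwd⟩ := Submodule.mem_sup.1 hvWD
    by_cases hw0 : w = 0
    · exfalso
      apply hv0
      have hdisj2 : Disjoint (span ℝ (Set.range F)) D := by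
        have h := aux_disjoint_ker F D.mkQ hqF
        rwa [Submodule.ker_mkQ] at h
      have hWnle : Wn n ≤ span ℝ (Set.range F) := by
        rw [hWndef]
        exact span_mono (image_subset_range _ _)
      have hvD : v ∈ D := by rw [← hwd, hw0, zero_add]; exact hd
      exact Submodule.disjoint_def.1 hdisj2 v (hWnle hv) hvD
    · have hwM : w ∈ M := by
        rcases hWM hw with h | h
        · exact h
        · exact absurd h hw0
      by_cases hd0 : d = 0
      · rw [← hwd, hd0, add_zero]
        exact hwM
      · have hdN : d ∈ N := by
          rcases hDN hd with h | h
          · exact h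
          · exact absurd h hd0
        rw [← hwd]
        exact hstr w hwM d hdN
  have hWnInter : ∀ m n, m ≠ n → Wn m ⊓ Wn n = span ℝ {x} := by
    intro m n hmn
    have hint := aux_span_inter hFli (A m) (A n)
    have hAmn : A m ∩ A n = {none} := by
      apply Set.eq_singleton_iff_unique_mem.2
      refine ⟨⟨mem_insert _ _, mem_insert _ _⟩, ?_⟩
      rintro o ⟨ho1, ho2⟩
      cases o with
      | none => rfl
      | some i =>
        exfalso
        have h1 : i.1 = ULift.up m := by
          rcases Set.mem_insert_iff.1 ho1 with h | h
          · exact absurd h (by simp)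
          · obtain ⟨i1, hi1, hi1e⟩ := h
            have hii : i1 = i := Option.some_injective _ hi1e
            rw [← hii]; exact hi1
        have h2 : i.1 = ULift.up n := by
          rcases Set.mem_insert_iff.1 ho2 with h | h
          · exact absurd h (by simp)
          · obtain ⟨i2, hi2, hi2e⟩ := h
            have hii : i2 = i := Option.some_injective _ hi2e
            rw [← hii]; exact hi2
        exact hmn (congrArg ULift.down (h1.symm.trans h2))
    rw [hAmn] at hint
    have hFnone : F '' ({none} : Set (Option ι₀)) = {x} := by simp [hFdef]
    rw [hFnone] at hint
    exact hint
  exact ⟨Wn, hWnDense, hWnRank, hxWn, hWnM, hWnInter⟩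
end

section
/- Let V be a topological vector space over ℝ and let α be an infinite cardinal with α ≥ w(V), the weight of V. Let M be a nonempty subset of V for which there exists a nonempty subset N of V such that (i) M is stronger than N, (ii) M ∩ N = ∅, and (iii) N is dense lineable in V. If M is pointwise α-lineable, then M is pointwise α-dense lineable; that is, for every x ∈ M there exists a linear subspace W of V that is dense in V and satisfies x ∈ W, dim(W) = α, and W ⊆ M ∪ {0}. -/
open Cardinal

theorem pointwise_dense_lineable
    {V : Type u} [AddCommGroup V] [Module ℝ V] [TopologicalSpace V]
    [IsTopologicalAddGroup V] [ContinuousSMul ℝ V]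
    (α : Cardinal.{u}) (hα : ℵ₀ ≤ α) (hw : topWeight V ≤ α)
    (M N : Set V) (hM : M.Nonempty) (hN : N.Nonempty)
    (hstr : ∀ x ∈ M, ∀ y ∈ N, x + y ∈ M)
    (hdisj : M ∩ N = ∅)
    (hdl : ∃ D : Submodule ℝ V, Dense (D : Set V) ∧ (D : Set V) ⊆ N ∪ {0})
    (hpl : ∀ x ∈ M, ∃ W : Submodule ℝ V,
      x ∈ W ∧ Module.rank ℝ W = α ∧ (W : Set V) ⊆ M ∪ {0}) :
    ∀ x ∈ M, ∃ W : Submodule ℝ V,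
      Dense (W : Set V) ∧ x ∈ W ∧ Module.rank ℝ W = α ∧
      (W : Set V) ⊆ M ∪ {0} := by
  obtain ⟨D, hDdense, hDN⟩ := hdl
  -- a topological basis of small cardinality
  obtain ⟨B, hB, hBcard⟩ : ∃ B : Set (Set V),
      TopologicalSpace.IsTopologicalBasis B ∧ #B ≤ α := by
    have hne : (Set.range fun B : {B : Set (Set V) //
        TopologicalSpace.IsTopologicalBasis B} => #B.1).Nonempty :=
      ⟨_, ⟨⟨{s | IsOpen s}, TopologicalSpace.isTopologicalBasis_opens⟩, rfl⟩⟩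
    have hmem := csInf_mem hne
    rw [show sInf _ = topWeight V from rfl] at hmem
    obtain ⟨B, hBeq⟩ := hmem
    exact ⟨B.1, B.2, hBeq.le.trans hw⟩
  intro x hx
  obtain ⟨A, hxA, hArank, hAM⟩ := hpl x hx
  -- A ∩ D is trivial
  have hAD : ∀ z : V, z ∈ A → z ∈ D → z = 0 := by
    intro z hzA hzD
    by_contra hz
    have h1 : z ∈ M := (hAM hzA).resolve_right hz
    have h2 : z ∈ N := (hDN hzD).resolve_right hz
    exact absurd (Set.mem_inter h1 h2) (by rw [hdisj]; exact Set.notMem_empty z)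
  -- basis of A
  obtain ⟨ι, c, hιcard⟩ : ∃ (ι : Type u) (c : Module.Basis ι ℝ ↥A), #ι = α :=
    ⟨_, Module.Basis.ofVectorSpace ℝ ↥A,
      by rw [(Module.Basis.ofVectorSpace ℝ ↥A).mk_eq_rank'']; exact hArank⟩
  set xA : ↥A := ⟨x, hxA⟩ with hxAdef
  set F : Finset ι := (c.repr xA).support with hFdef
  have hcompl : #((↑F : Set ι)ᶜ : Set ι) = α := by
    have h1 := Cardinal.mk_sum_compl (↑F : Set ι)
    rw [hιcard] at h1
    rcases lt_or_ge (#((↑F : Set ι)ᶜ : Set ι)) α with h | h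
    · exfalso
      have hFfin : #(↑F : Set ι) < α :=
        lt_of_lt_of_le (Cardinal.mk_lt_aleph0_iff.2 F.finite_toSet) hα
      exact absurd h1 (ne_of_lt (Cardinal.add_lt_of_lt hα hFfin h))
    · exact le_antisymm (le_add_self.trans h1.le) h
  -- index of nonempty basis opens
  set K := {U : Set V // U ∈ B ∧ U.Nonempty} with hKdef
  have hKcard : #K ≤ α :=
    le_trans (Cardinal.mk_le_mk_of_subset (fun U hU => hU.1)) hBcard
  -- embedding of K into the complement of F
  obtain ⟨f⟩ : Nonempty (K ↪ ((↑F : Set ι)ᶜ : Set ι)) := by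
    rw [← Cardinal.le_def, hcompl]; exact hKcard
  have hf'inj : Function.Injective (fun k : K => (f k : ι)) :=
    fun a b h => f.injective (Subtype.ext h)
  set f' : K → ι := fun k => (f k : ι) with hf'def
  set R : Set ι := Set.range f' with hRdef
  -- choose points and scalars
  have hpick : ∀ k : K, ∃ b : V, ∃ δ : ℝ, b ∈ D ∧ δ ≠ 0 ∧
      b + δ • ((c (f' k) : ↥A) : V) ∈ k.1 := by
    intro k
    obtain ⟨b, hbD, hbU⟩ := hDdense.exists_mem_open (hB.isOpen k.2.1) k.2.2
    set v : V := ((c (f' k) : ↥A) : V)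
    have hcont : Continuous fun t : ℝ => b + t • v := by fun_prop
    have hpre : (fun t : ℝ => b + t • v) ⁻¹' k.1 ∈ nhds (0 : ℝ) := by
      apply hcont.continuousAt.preimage_mem_nhds
      simpa using (hB.isOpen k.2.1).mem_nhds hbU
    obtain ⟨ε, hε, hball⟩ := Metric.mem_nhds_iff.mp hpre
    refine ⟨b, ε / 2, hbD, by positivity, ?_⟩
    apply hball
    rw [Metric.mem_ball, dist_zero_right, Real.norm_eq_abs,
      abs_of_pos (by positivity : (0:ℝ) < ε / 2)]
    linarith
  choose bb δ hbD hδ hwU using hpick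
  -- the index type and generating family
  set ι₁ := (Rᶜ : Set ι) with hι₁def
  set u : K ⊕ ι₁ → V := Sum.elim (fun k => δ k • ((c (f' k) : ↥A) : V))
    (fun i => ((c i.1 : ↥A) : V)) with hudef
  set g : K ⊕ ι₁ → V := Sum.elim (fun k => bb k + δ k • ((c (f' k) : ↥A) : V))
    (fun i => ((c i.1 : ↥A) : V)) with hgdef
  set e : K ⊕ ι₁ → ι := Sum.elim f' (fun i => i.1) with hedef
  have heinj : Function.Injective e := by
    rintro (a | a) (b | b) h
    · exact congrArg Sum.inl (hf'inj h)
    · exact absurd ⟨a, h⟩ b.2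
    · exact absurd ⟨b, h.symm⟩ a.2
    · exact congrArg Sum.inr (Subtype.ext h)
  -- u is linearly independent
  have huA : ∀ j, u j ∈ A := by
    rintro (k | i)
    · exact A.smul_mem _ (SetLike.coe_mem _)
    · exact SetLike.coe_mem _
  have hu_li : LinearIndependent ℝ u := by
    have h1 : LinearIndependent ℝ fun j => ((c (e j) : ↥A) : V) :=
      (c.linearIndependent.comp e heinj).map' A.subtype A.ker_subtype
    have h2 := h1.units_smul
      (Sum.elim (fun k : K => (Units.mk0 (δ k) (hδ k) : ℝˣ)) (fun _ : ι₁ => 1))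
    have h3 : ((Sum.elim (fun k : K => (Units.mk0 (δ k) (hδ k) : ℝˣ)) (fun _ : ι₁ => 1)) •
        fun j => ((c (e j) : ↥A) : V)) = u := by
      funext j
      cases j with
      | inl k => simp [hudef, hedef, Pi.smul_apply', Units.smul_def]
      | inr i => simp [hudef, hedef, Pi.smul_apply', Units.smul_def]
    rwa [h3] at h2
  -- g is linearly independent
  have hgu : (D.mkQ : V →ₗ[ℝ] V ⧸ D) ∘ g = (D.mkQ : V →ₗ[ℝ] V ⧸ D) ∘ u := by
    funext j
    cases j with
    | inl k =>
      have hz : D.mkQ (bb k) = 0 := by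
        simpa using (Submodule.Quotient.mk_eq_zero D).2 (hbD k)
      simp [hgdef, hudef, map_add, hz]
    | inr i => rfl
  have hg_li : LinearIndependent ℝ g := by
    apply LinearIndependent.of_comp (D.mkQ)
    rw [hgu]
    apply hu_li.map
    rw [Submodule.ker_mkQ]
    refine Disjoint.mono_left ?_ (Submodule.disjoint_def.2 hAD)
    rw [Submodule.span_le]
    rintro _ ⟨j, rfl⟩
    exact huA j
  -- the dense subspace
  refine ⟨Submodule.span ℝ (Set.range g), ?_, ?_, ?_, ?_⟩
  · -- dense
    rw [dense_iff_inter_open]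
    intro O hO hOne
    obtain ⟨y, hy⟩ := hOne
    obtain ⟨U, hUB, hyU, hUO⟩ := hB.exists_subset_of_mem_open hy hO
    refine ⟨g (Sum.inl ⟨U, hUB, ⟨y, hyU⟩⟩), hUO ?_,
      Submodule.subset_span ⟨Sum.inl ⟨U, hUB, ⟨y, hyU⟩⟩, rfl⟩⟩
    exact hwU ⟨U, hUB, ⟨y, hyU⟩⟩
  · -- x ∈ W
    have hsub : ∀ i ∈ F, ((c i : ↥A) : V) ∈ Submodule.span ℝ (Set.range g) := by
      intro i hi
      have hiR : i ∉ R := by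
        rintro ⟨k, rfl⟩
        exact (f k).2 (by simpa [hf'def] using hi)
      exact Submodule.subset_span ⟨Sum.inr ⟨i, hiR⟩, rfl⟩
    have hrep : x = ∑ i ∈ F, (c.repr xA) i • ((c i : ↥A) : V) := by
      have h4 := c.linearCombination_repr xA
      rw [Finsupp.linearCombination_apply, Finsupp.sum] at h4
      calc x = ((xA : ↥A) : V) := rfl
        _ = _ := by conv_lhs => rw [← h4]
                    push_cast
                    rfl
    rw [hrep]
    exact Submodule.sum_mem _ (fun i hi => Submodule.smul_mem _ _ (hsub i hi))
  · -- rank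
    rw [rank_span hg_li, Cardinal.mk_range_eq g hg_li.injective,
      Cardinal.mk_sum, Cardinal.lift_id, Cardinal.lift_id,
      ← Cardinal.mk_range_eq f' hf'inj, ← hRdef]
    rw [← hιcard]
    exact Cardinal.mk_sum_compl R
  · -- contained in M ∪ {0}
    intro w hwmem
    rcases eq_or_ne w 0 with rfl | hw0
    · exact Or.inr rfl
    left
    have hwmem' : w ∈ Submodule.span ℝ (Set.range g) := hwmem
    rw [Finsupp.mem_span_range_iff_exists_finsupp] at hwmem'
    obtain ⟨l, hl⟩ := hwmem'
    set aa : V := l.sum fun j r => r • u j with haadef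
    set dd : V := l.sum fun j r => r • (g j - u j) with hdddef
    have haaA : aa ∈ A := Submodule.sum_mem _ fun j _ => A.smul_mem _ (huA j)
    have hgd : ∀ j, g j - u j ∈ D := by
      rintro (k | i)
      · simpa [hgdef, hudef] using hbD k
      · simpa [hgdef, hudef] using D.zero_mem
    have hddD : dd ∈ D := Submodule.sum_mem _ fun j _ => D.smul_mem _ (hgd j)
    have hsum : w = dd + aa := by
      rw [haadef, hdddef, ← Finsupp.sum_add]
      rw [← hl]
      congr 1
      funext j r
      rw [← smul_add, sub_add_cancel]
    have haane : aa ≠ 0 := by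
      intro h0
      apply hw0
      have hl0 : l = 0 := by
        apply linearIndependent_iff.mp hu_li l
        rw [Finsupp.linearCombination_apply]
        exact h0
      rw [← hl, hl0, Finsupp.sum_zero_index]
    have haM : aa ∈ M := (hAM haaA).resolve_right haane
    rcases hDN hddD with hdN | hd0
    · rw [hsum, add_comm]
      exact hstr aa haM dd hdN
    · rw [hsum, hd0, zero_add]
      exact haM
end

section
/- Let V be a vector space over a field 𝕂 and let W and U be linear subspaces of V with W ∩ U = {0}. Let (w_j)_{j ∈ J} be a linearly independent family of vectors of W, and let J₁, J₂ ⊆ J be index sets with J₁ ∩ J₂ = {j₀}. For i = 1, 2, let (u_{i,j})_{j ∈ J_i} be a family of vectors of U with u_{1,j₀} = u_{2,j₀} = 0, and set D_i = span{ w_j + u_{i,j} : j ∈ J_i }. Then D₁ ∩ D₂ = 𝕂·w_{j₀}, the one-dimensional span of w_{j₀}. -/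
theorem span_inter_eq_span_singleton
    {𝕂 : Type*} {V : Type*} [Field 𝕂] [AddCommGroup V] [Module 𝕂 V]
    (W U : Submodule 𝕂 V) (hWU : W ⊓ U = ⊥)
    {J : Type*} (w : J → V) (hwW : ∀ j, w j ∈ W)
    (hli : LinearIndependent 𝕂 w)
    (J₁ J₂ : Set J) (j₀ : J) (hJ : J₁ ∩ J₂ = {j₀})
    (u₁ u₂ : J → V)
    (hu₁U : ∀ j ∈ J₁, u₁ j ∈ U) (hu₂U : ∀ j ∈ J₂, u₂ j ∈ U)
    (hu₁ : u₁ j₀ = 0) (hu₂ : u₂ j₀ = 0) :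
    Submodule.span 𝕂 ((fun j => w j + u₁ j) '' J₁) ⊓
      Submodule.span 𝕂 ((fun j => w j + u₂ j) '' J₂) =
      Submodule.span 𝕂 {w j₀} := by
  have hj₀₁ : j₀ ∈ J₁ := by
    have : j₀ ∈ J₁ ∩ J₂ := hJ ▸ rfl
    exact this.1
  have hj₀₂ : j₀ ∈ J₂ := by
    have : j₀ ∈ J₁ ∩ J₂ := hJ ▸ rfl
    exact this.2
  apply le_antisymm
  · rintro x ⟨hx₁, hx₂⟩
    obtain ⟨l, hl, hlx⟩ := (Finsupp.mem_span_image_iff_linearCombination 𝕂).mp hx₁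
    obtain ⟨m, hm, hmx⟩ := (Finsupp.mem_span_image_iff_linearCombination 𝕂).mp hx₂
    -- split linear combinations
    have split : ∀ (n : J →₀ 𝕂) (u : J → V),
        Finsupp.linearCombination 𝕂 (fun j => w j + u j) n =
          Finsupp.linearCombination 𝕂 w n + Finsupp.linearCombination 𝕂 u n := by
      intro n u
      simp only [Finsupp.linearCombination_apply, Finsupp.sum, smul_add,
        Finset.sum_add_distrib]
    have hWmem : ∀ (n : J →₀ 𝕂), Finsupp.linearCombination 𝕂 w n ∈ W := by
      intro n
      apply Submodule.sum_mem
      intro j _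
      exact W.smul_mem _ (hwW j)
    have hUmem : ∀ (n : J →₀ 𝕂) (u : J → V) (s : Set J), n ∈ Finsupp.supported 𝕂 𝕂 s →
        (∀ j ∈ s, u j ∈ U) → Finsupp.linearCombination 𝕂 u n ∈ U := by
      intro n u s hs hu
      apply Submodule.sum_mem
      intro j hj
      exact U.smul_mem _ (hu j (hs hj))
    have key : Finsupp.linearCombination 𝕂 w (l - m) = 0 := by
      have hW : Finsupp.linearCombination 𝕂 w (l - m) ∈ W := hWmem _
      have hU : Finsupp.linearCombination 𝕂 w (l - m) ∈ U := by
        have : Finsupp.linearCombination 𝕂 w (l - m) =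
            Finsupp.linearCombination 𝕂 u₂ m - Finsupp.linearCombination 𝕂 u₁ l := by
          have e1 := split l u₁
          have e2 := split m u₂
          rw [hlx] at e1
          rw [hmx] at e2
          rw [map_sub]
          linear_combination (norm := abel) e2 - e1
        rw [this]
        exact U.sub_mem (hUmem m u₂ J₂ hm hu₂U) (hUmem l u₁ J₁ hl hu₁U)
      have : Finsupp.linearCombination 𝕂 w (l - m) ∈ W ⊓ U := ⟨hW, hU⟩
      rw [hWU] at this
      exact this
    have hlm : l = m := by
      have := linearIndependent_iff.mp hli _ key
      have := sub_eq_zero.mp this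
      exact this
    -- l supported on J₁ ∩ J₂ = {j₀}
    have hsupp : (l.support : Set J) ⊆ {j₀} := by
      rw [← hJ]
      intro j hj
      exact ⟨hl hj, hm (by rwa [hlm] at hj)⟩
    have hsingle : l = Finsupp.single j₀ (l j₀) := by
      apply Finsupp.support_subset_singleton.mp
      intro j hj
      simpa using hsupp hj
    have : x = l j₀ • w j₀ := by
      rw [← hlx, split l u₁, hsingle]
      simp [hu₁]
    rw [this]
    exact Submodule.smul_mem _ _ (Submodule.subset_span rfl)
  · rw [Submodule.span_le]
    rintro _ rfl
    constructor
    · apply Submodule.subset_span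
      exact ⟨j₀, hj₀₁, by simp [hu₁]⟩
    · apply Submodule.subset_span
      exact ⟨j₀, hj₀₂, by simp [hu₂]⟩
end
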